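/- arXiv:1202.2370 — 2 statements merged into one kernel-verified Lean document; each statement's English description precedes it below -/
import Mathlib

section
/- (Lemma 3.1) For every n ≥ 1, the total number of 2-tree-lines starting from the root that lie within the full binary tree with n levels is at most (2^n)^(29/10). That is, the number of finite sequences v₁, …, v_N (N ≥ 0) of pairwise distinct binary strings, each of length at most n − 1, such that v₁ has length 1, v₂ is a child of the root or of v₁, and v_{i+1} is a child of v_i or of v_{i−1} for every i ≥ 2, is at most 2^(29·n/10). Hence a data set whose full support tree has m = 2^n − 1 nodes has O(m^{2.9}) 2-tree-lines. -/
/-- `q` is a child of `p` in the infinite binary tree, nodes being encoded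
as finite boolean strings (the root is the empty string). -/
def IsChild (p q : List Bool) : Prop := ∃ b : Bool, q = p ++ [b]

/-- A 2-tree-line starting from the root: a finite sequence `v₁, …, v_N` of
pairwise distinct binary strings such that `v₁` is a child of the root
(i.e. has length 1), `v₂` is a child of the root or of `v₁`, and each
`v_{i+1}` with `i ≥ 2` is a child of `v_i` or of `v_{i-1}`. -/
def IsTwoTreeLine (v : List (List Bool)) : Prop :=
  v.Nodup ∧
  (∀ h : 0 < v.length, (v.get ⟨0, h⟩).length = 1) ∧
  (∀ h : 1 < v.length,
    IsChild [] (v.get ⟨1, h⟩) ∨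
      IsChild (v.get ⟨0, by omega⟩) (v.get ⟨1, h⟩)) ∧
  (∀ i : ℕ, ∀ h : i + 2 < v.length,
    IsChild (v.get ⟨i + 1, by omega⟩) (v.get ⟨i + 2, h⟩) ∨
      IsChild (v.get ⟨i, by omega⟩) (v.get ⟨i + 2, h⟩))

/-!
A 2-tree-line is determined by its word of moves: each node is a child of the current node or
of the previous one, and when the current node is itself a child of the previous one,
distinctness leaves only its sibling for the second option. Recording the relative position of
the last two nodes (same depth, parent and child, or one level apart otherwise) and how far the
current node may still descend, the admissible move words obey a three-phase linear recurrence
whose growth rate is `4 + 2√3 < 2 ^ 2.9`.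
-/

instance (p q : List Bool) : Decidable (IsChild p q) :=
  inferInstanceAs (Decidable (∃ b : Bool, q = p ++ [b]))

def IsLineStep (pp p x : List Bool) : Prop := (IsChild p x ∨ IsChild pp x) ∧ x ≠ p

/-- `IsLineFrom pp p v`: `v` continues a 2-tree-line whose last two nodes are `pp, p`. -/
def IsLineFrom : List Bool → List Bool → List (List Bool) → Prop
  | _, _, [] => True
  | pp, p, x :: r => IsLineStep pp p x ∧ IsLineFrom p x r

theorem isLineFrom_of_getElem : ∀ {v : List (List Bool)} {pp p : List Bool},
    (∀ i (h : i + 2 < (pp :: p :: v).length),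
      IsLineStep (pp :: p :: v)[i] (pp :: p :: v)[i + 1] (pp :: p :: v)[i + 2]) →
    IsLineFrom pp p v
  | [], _, _, _ => trivial
  | _ :: _, _, _, h =>
    ⟨h 0 (by simp), isLineFrom_of_getElem fun i hi => h (i + 1) (by simp at hi ⊢; omega)⟩

/-- The root plays the role of both predecessors of `v₁`. -/
theorem IsTwoTreeLine.isLineFrom {v : List (List Bool)} (hv : IsTwoTreeLine v) :
    IsLineFrom [] [] v := by
  obtain ⟨hnd, h0, h1, h2⟩ := hv
  simp only [List.get_eq_getElem] at h0 h1 h2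
  refine isLineFrom_of_getElem fun i hi => ?_
  match i with
  | 0 =>
    have hpos : 0 < v.length := by simp at hi; omega
    obtain ⟨a, ha⟩ := List.length_eq_one_iff.mp (h0 hpos)
    have hchild : IsChild [] v[0] := ⟨a, by simpa using ha⟩
    exact ⟨Or.inl hchild, by simp [ha]⟩
  | 1 =>
    refine ⟨(h1 (by simp at hi; omega)).symm, fun h => ?_⟩
    simpa using (hnd.getElem_inj_iff).mp h
  | i + 2 =>
    refine ⟨h2 i (by simp at hi; omega), fun h => ?_⟩
    simpa using (hnd.getElem_inj_iff).mp h

inductive Move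
  | child (b : Bool)
  | back (b : Bool)
  | sibling
  deriving DecidableEq

namespace Move

def target (pp p : List Bool) : Move → List Bool
  | child b => p ++ [b]
  | back b => pp ++ [b]
  | sibling => pp ++ [!p.getLastD false]

def of (pp p x : List Bool) : Move :=
  if IsChild p x then child (x.getLastD false)
  else if IsChild pp p then sibling
  else back (x.getLastD false)

theorem target_of {pp p x : List Bool} (h : IsLineStep pp p x) :
    (of pp p x).target pp p = x := by
  obtain ⟨hstep, hne⟩ := h
  by_cases hp : IsChild p x
  · obtain ⟨c, rfl⟩ := id hp
    simp [of, target, hp]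
  obtain ⟨c, rfl⟩ := hstep.resolve_left hp
  by_cases hpp : IsChild pp p
  · obtain ⟨d, rfl⟩ := id hpp
    -- `x ≠ p` forces `x` to be the sibling of `p`
    have hcd : c = !d := by cases c <;> cases d <;> simp_all
    subst hcd
    simp [of, target, hp, hpp]
  · simp [of, target, hp, hpp]

end Move

def encode : List Bool → List Bool → List (List Bool) → List Move
  | _, _, [] => []
  | pp, p, x :: r => Move.of pp p x :: encode p x r

def decode : List Bool → List Bool → List Move → List (List Bool)
  | _, _, [] => []
  | pp, p, μ :: r => μ.target pp p :: decode p (μ.target pp p) r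

theorem decode_encode : ∀ {pp p : List Bool} {v : List (List Bool)},
    IsLineFrom pp p v → decode pp p (encode pp p v) = v
  | _, _, [], _ => rfl
  | _, _, _ :: _, ⟨hx, hr⟩ => by
    simp only [encode, decode, Move.target_of hx, decode_encode hr]

inductive Phase
  | flat
  | child
  | skew

open Finset

namespace Phase

def Holds : Phase → List Bool → List Bool → Prop
  | flat, pp, p => p.length = pp.length
  | child, pp, p => IsChild pp p
  | skew, pp, p => p.length = pp.length + 1 ∧ ¬IsChild pp p

def rank : Phase → ℕ
  | flat => 0
  | _ => 1

end Phase

/-- Move words that can encode a continuation from phase `φ` when the current node may still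
descend `b` levels. -/
def codes : Phase → ℕ → Finset (List Move)
  | .flat, 0 => {[]}
  | .flat, b + 1 => insert [] (image₂ (fun c w => .child c :: w) univ (codes .child b) ∪
      image₂ (fun c w => .back c :: w) univ (codes .skew b))
  | .child, 0 => insert [] ((codes .flat 0).image (.sibling :: ·))
  | .child, b + 1 => insert [] (image₂ (fun c w => .child c :: w) univ (codes .child b) ∪
      (codes .flat (b + 1)).image (.sibling :: ·))
  | .skew, 0 => insert [] (image₂ (fun c w => .back c :: w) univ (codes .flat 0))
  | .skew, b + 1 => insert [] (image₂ (fun c w => .child c :: w) univ (codes .child b) ∪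
      image₂ (fun c w => .back c :: w) univ (codes .flat (b + 1)))
termination_by φ b => 2 * b + φ.rank
decreasing_by all_goals simp only [Phase.rank]; omega

theorem nil_mem_codes (φ : Phase) (b : ℕ) : [] ∈ codes φ b := by
  cases φ <;> cases b <;> simp [codes]

theorem child_cons_mem_codes (φ : Phase) (c : Bool) {b : ℕ} {w : List Move}
    (hw : w ∈ codes .child b) : .child c :: w ∈ codes φ (b + 1) := by
  cases φ <;> rw [codes] <;> simp [hw]

theorem sibling_cons_mem_codes {b : ℕ} {w : List Move} (hw : w ∈ codes .flat b) :
    .sibling :: w ∈ codes .child b := by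
  cases b <;> rw [codes] <;> simp [hw]

theorem back_cons_mem_codes_flat (c : Bool) {b : ℕ} {w : List Move} (hw : w ∈ codes .skew b) :
    .back c :: w ∈ codes .flat (b + 1) := by
  rw [codes]; simp [hw]

theorem back_cons_mem_codes_skew (c : Bool) {b : ℕ} {w : List Move} (hw : w ∈ codes .flat b) :
    .back c :: w ∈ codes .skew b := by
  cases b <;> rw [codes] <;> simp [hw]

theorem exists_codes_step {m b : ℕ} {φ : Phase} {pp p x : List Bool}
    (hφ : φ.Holds pp p) (hx : IsChild p x ∨ IsChild pp x) (hxm : x.length ≤ m)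
    (hb : p.length + b = m) :
    ∃ ψ : Phase, ∃ b', ψ.Holds p x ∧ x.length + b' = m ∧
      ∀ w ∈ codes ψ b', Move.of pp p x :: w ∈ codes φ b := by
  by_cases hp : IsChild p x
  · obtain ⟨c, rfl⟩ := id hp
    obtain ⟨b', rfl⟩ : ∃ b', b = b' + 1 := ⟨b - 1, by simp at hxm; omega⟩
    refine ⟨.child, b', hp, by simp; omega, fun w hw => ?_⟩
    rw [Move.of, if_pos hp, List.getLastD_concat]
    exact child_cons_mem_codes φ c hw
  obtain ⟨c, rfl⟩ := hx.resolve_left hp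
  cases φ with
  | flat =>
    have hpp : ¬IsChild pp p := by rintro ⟨d, rfl⟩; simp [Phase.Holds] at hφ
    obtain ⟨b', rfl⟩ : ∃ b', b = b' + 1 :=
      ⟨b - 1, by simp [Phase.Holds] at hxm hφ; omega⟩
    refine ⟨.skew, b', ⟨by simp_all [Phase.Holds], hp⟩, by simp_all [Phase.Holds]; omega,
      fun w hw => ?_⟩
    rw [Move.of, if_neg hp, if_neg hpp, List.getLastD_concat]
    exact back_cons_mem_codes_flat c hw
  | child =>
    obtain ⟨d, rfl⟩ := id hφ
    refine ⟨.flat, b, by simp [Phase.Holds], by simp_all, fun w hw => ?_⟩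
    rw [Move.of, if_neg hp, if_pos ⟨d, rfl⟩]
    exact sibling_cons_mem_codes hw
  | skew =>
    refine ⟨.flat, b, by simp [Phase.Holds, hφ.1], by simp_all [Phase.Holds], fun w hw => ?_⟩
    rw [Move.of, if_neg hp, if_neg hφ.2, List.getLastD_concat]
    exact back_cons_mem_codes_skew c hw

theorem encode_mem_codes {m : ℕ} :
    ∀ {v : List (List Bool)} {pp p : List Bool} {φ : Phase} {b : ℕ}, IsLineFrom pp p v →
      (∀ x ∈ v, x.length ≤ m) → φ.Holds pp p → p.length + b = m →
      encode pp p v ∈ codes φ b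
  | [], _, _, φ, b, _, _, _, _ => nil_mem_codes φ b
  | x :: _, _, _, _, _, ⟨hx, hr⟩, hm, hφ, hb => by
    obtain ⟨ψ, b', hψ, hb', hmem⟩ := exists_codes_step hφ hx.1 (hm x (by simp)) hb
    exact hmem _ (encode_mem_codes hr (fun y hy => hm y (by simp [hy])) hψ hb')

theorem card_image₂_cons_le (f : Bool → Move) (s : Finset (List Move)) :
    #(image₂ (fun c w => f c :: w) univ s) ≤ 2 * #s := by
  simpa using card_image₂_le (fun c w => f c :: w) univ s

theorem card_codes_flat_succ (b : ℕ) :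
    #(codes .flat (b + 1)) ≤ 1 + 2 * #(codes .child b) + 2 * #(codes .skew b) := by
  conv_lhs => rw [codes]
  grw [card_insert_le, card_union_le, card_image₂_cons_le, card_image₂_cons_le]
  omega

theorem card_codes_child_zero : #(codes .child 0) ≤ 2 := by
  conv_lhs => rw [codes]
  grw [card_insert_le, card_image_le]
  simp [codes]

theorem card_codes_child_succ (b : ℕ) :
    #(codes .child (b + 1)) ≤ 1 + 2 * #(codes .child b) + #(codes .flat (b + 1)) := by
  conv_lhs => rw [codes]
  grw [card_insert_le, card_union_le, card_image₂_cons_le, card_image_le]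
  omega

theorem card_codes_skew_zero : #(codes .skew 0) ≤ 3 := by
  conv_lhs => rw [codes]
  grw [card_insert_le, card_image₂_cons_le]
  simp [codes]

theorem card_codes_skew_succ (b : ℕ) :
    #(codes .skew (b + 1)) ≤ 1 + 2 * #(codes .child b) + 2 * #(codes .flat (b + 1)) := by
  conv_lhs => rw [codes]
  grw [card_insert_le, card_union_le, card_image₂_cons_le, card_image₂_cons_le]
  omega

/-- The coefficients `3, 3√3, 3√3 - 3` form a Perron eigenvector, for the eigenvalue
`4 + 2√3`, of the recurrence satisfied by the cardinalities. -/
theorem card_codes_le (b : ℕ) :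
    (#(codes .child b) : ℝ) ≤ 3 * (4 + 2 * √3) ^ b - 1 ∧
    (#(codes .skew b) : ℝ) ≤ 3 * √3 * (4 + 2 * √3) ^ b - 1 ∧
    (#(codes .flat b) : ℝ) ≤ (3 * √3 - 3) * (4 + 2 * √3) ^ b := by
  have hs : √3 ^ 2 = 3 := Real.sq_sqrt (by norm_num)
  have hs' : 1.7 ≤ √3 := by nlinarith [Real.sqrt_nonneg 3]
  induction b with
  | zero =>
    have hflat : #(codes .flat 0) = 1 := by simp [codes]
    have hchild : (#(codes .child 0) : ℝ) ≤ 2 := mod_cast card_codes_child_zero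
    have hskew : (#(codes .skew 0) : ℝ) ≤ 3 := mod_cast card_codes_skew_zero
    simp only [pow_zero, mul_one, hflat, Nat.cast_one]
    exact ⟨by linarith, by linarith, by linarith⟩
  | succ b ih =>
    obtain ⟨hchild, hskew, hflat⟩ := ih
    set t := (4 + 2 * √3) ^ b
    have ht : 1 ≤ t := one_le_pow₀ (by linarith)
    have hchild_eq : 3 * (4 + 2 * √3) ^ (b + 1) = 12 * t + 6 * √3 * t := by
      rw [pow_succ]; ring
    have hskew_eq : 3 * √3 * (4 + 2 * √3) ^ (b + 1) = 18 * t + 12 * √3 * t := by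
      rw [pow_succ]; linear_combination (6 * t) * hs
    have hflat_eq : (3 * √3 - 3) * (4 + 2 * √3) ^ (b + 1) = 6 * t + 6 * √3 * t := by
      rw [pow_succ]; linear_combination (6 * t) * hs
    have hflat_rec : (#(codes .flat (b + 1)) : ℝ) ≤
        1 + 2 * #(codes .child b) + 2 * #(codes .skew b) :=
      mod_cast card_codes_flat_succ b
    have hchild_rec : (#(codes .child (b + 1)) : ℝ) ≤
        1 + 2 * #(codes .child b) + #(codes .flat (b + 1)) :=
      mod_cast card_codes_child_succ b
    have hskew_rec : (#(codes .skew (b + 1)) : ℝ) ≤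
        1 + 2 * #(codes .child b) + 2 * #(codes .flat (b + 1)) :=
      mod_cast card_codes_skew_succ b
    exact ⟨by linarith, by linarith, by linarith⟩

theorem card_twoTreeLines_le_card_codes (m : ℕ) :
    Nat.card {v : List (List Bool) // IsTwoTreeLine v ∧ ∀ p ∈ v, p.length ≤ m} ≤
      #(codes .flat m) := by
  have hsub : {v | IsTwoTreeLine v ∧ ∀ p ∈ v, p.length ≤ m} ⊆
      ((codes .flat m).image (decode [] []) : Set (List (List Bool))) := by
    rintro v ⟨hv, hm⟩
    rw [coe_image]
    exact ⟨encode [] [] v, encode_mem_codes hv.isLineFrom hm rfl (by simp),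
      decode_encode hv.isLineFrom⟩
  calc Nat.card {v : List (List Bool) // IsTwoTreeLine v ∧ ∀ p ∈ v, p.length ≤ m}
      ≤ Nat.card ((codes .flat m).image (decode [] [])) :=
        Nat.card_mono (finite_toSet _) hsub
    _ = #((codes .flat m).image (decode [] [])) := Nat.card_eq_finsetCard _
    _ ≤ #(codes .flat m) := card_image_le

theorem four_add_two_mul_sqrt_three_le_rpow : 4 + 2 * √3 ≤ (2 : ℝ) ^ ((29 : ℝ) / 10) := by
  have hs : √3 ≤ 1.73206 := by
    rw [Real.sqrt_le_left (by norm_num)]; norm_num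
  have h10 : ((2 : ℝ) ^ ((29 : ℝ) / 10)) ^ 10 = 2 ^ 29 := by
    rw [← Real.rpow_natCast, ← Real.rpow_mul (by norm_num)]; norm_num
  refine le_of_pow_le_pow_left₀ (n := 10) (by norm_num) (by positivity) ?_
  calc (4 + 2 * √3) ^ 10 ≤ (7.46412 : ℝ) ^ 10 := by gcongr; linarith
    _ ≤ 2 ^ 29 := by norm_num
    _ = _ := h10.symm

/-- Lemma 3.1: the number of 2-tree-lines starting from the root and lying
within the full binary tree with `n` levels (all node strings of length at
most `n - 1`, i.e. `m = 2^n - 1` nodes) is at most `(2^n)^(29/10) = m^{O(2.9)}`. -/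
theorem count_two_tree_lines_in_full_tree_le (n : ℕ) (hn : 1 ≤ n) :
    (Nat.card {v : List (List Bool) //
        IsTwoTreeLine v ∧ ∀ p ∈ v, p.length ≤ n - 1} : ℝ) ≤
      ((2 : ℝ) ^ n) ^ ((29 : ℝ) / 10) := by
  obtain ⟨m, rfl⟩ : ∃ m, n = m + 1 := ⟨n - 1, by omega⟩
  have hs : √3 ^ 2 = 3 := Real.sq_sqrt (by norm_num)
  calc (Nat.card {v : List (List Bool) //
        IsTwoTreeLine v ∧ ∀ p ∈ v, p.length ≤ m + 1 - 1} : ℝ)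
      ≤ #(codes .flat m) := mod_cast card_twoTreeLines_le_card_codes m
    _ ≤ (3 * √3 - 3) * (4 + 2 * √3) ^ m := (card_codes_le m).2.2
    _ ≤ (4 + 2 * √3) ^ (m + 1) := by
      rw [pow_succ']; gcongr; nlinarith [Real.sqrt_nonneg 3]
    _ ≤ ((2 : ℝ) ^ ((29 : ℝ) / 10)) ^ (m + 1) := by
      gcongr; exact four_add_two_mul_sqrt_three_le_rpow
    _ = ((2 : ℝ) ^ (m + 1)) ^ ((29 : ℝ) / 10) := by
      rw [← Real.rpow_natCast, ← Real.rpow_natCast, ← Real.rpow_mul (by norm_num),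
        ← Real.rpow_mul (by norm_num), mul_comm]
end

section
/- Let v₁, …, v_N be a 2-tree-line starting from the root, i.e., pairwise distinct binary strings with v₁ of length 1, v₂ a child of the root or of v₁, and v_{i+1} a child of v_i or of v_{i−1} for every i ≥ 2. Then the lengths |v₁| ≤ |v₂| ≤ … ≤ |v_N| are nondecreasing, and for every ℓ ≥ 1 there are at most 2 indices i with |v_i| = ℓ. Consequently, if every v_i has length at most n − 1, then N ≤ 2·(n − 1); i.e., a 2-tree-line within a full support tree of depth n contains (counting the root) at most 1 + 2·(n − 1) nodes. -/
/-!
Every node of a 2-tree-line is a child of one of its two predecessors, so inductively the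
levels `|v₁|, |v₂|, …` never drop and grow by at most one per step. Moreover `v_{i+2}` lies
strictly below `v_i`: either it is a child of `v_i`, or it is a child of `v_{i+1}`, which is
not above `v_i`. Hence any two nodes at least two steps apart are on different levels, so each
level holds at most two nodes, and `|v_{2k+1}| ≥ k + 1`, which bounds the length of a shallow
line.
-/

theorem List.countP_le_two_of_forall_add_two_le {α : Type*} {l : List α} {p : α → Bool}
    (h : ∀ i j : Fin l.length, (i : ℕ) + 2 ≤ j → p l[i] → ¬ p l[j]) :
    l.countP p ≤ 2 := by
  by_contra! hcount
  rw [countP_eq_length_filter] at hcount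
  obtain ⟨e, he⟩ := sublist_iff_exists_fin_orderEmbedding_get_eq.mp (l.filter_sublist (p := p))
  have hp : ∀ k : Fin (l.filter p).length, p l[(e k).val] := fun k => by
    simpa [← List.get_eq_getElem, ← he] using of_mem_filter (getElem_mem k.isLt)
  have hsep : (e ⟨0, by omega⟩).val + 2 ≤ e ⟨2, hcount⟩ := by
    have h01 : e ⟨0, by omega⟩ < e ⟨1, by omega⟩ := e.strictMono (by simp [Fin.lt_def])
    have h12 : e ⟨1, by omega⟩ < e ⟨2, hcount⟩ := e.strictMono (by simp [Fin.lt_def])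
    omega
  exact h _ _ hsep (hp _) (hp _)

theorem IsChild.length_eq {p q : List Bool} (h : IsChild p q) : q.length = p.length + 1 := by
  obtain ⟨b, rfl⟩ := h
  simp

namespace IsTwoTreeLine

variable {v : List (List Bool)}

theorem length_getElem_zero (hv : IsTwoTreeLine v) (h : 0 < v.length) : v[0].length = 1 :=
  hv.2.1 h

theorem isChild_getElem_one (hv : IsTwoTreeLine v) (h : 1 < v.length) :
    IsChild [] v[1] ∨ IsChild v[0] v[1] :=
  hv.2.2.1 h

theorem isChild_getElem_add_two (hv : IsTwoTreeLine v) {i : ℕ} (h : i + 2 < v.length) :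
    IsChild v[i + 1] v[i + 2] ∨ IsChild v[i] v[i + 2] :=
  hv.2.2.2 i h

theorem length_getElem_succ (hv : IsTwoTreeLine v) {i : ℕ} (h : i + 1 < v.length) :
    v[i + 1].length = v[i].length ∨ v[i + 1].length = v[i].length + 1 := by
  induction i with
  | zero =>
    rcases hv.isChild_getElem_one h with hroot | hchild
    · exact .inl (by simpa [hv.length_getElem_zero] using hroot.length_eq)
    · exact .inr hchild.length_eq
  | succ i ih =>
    show v[i + 2].length = v[i + 1].length ∨ v[i + 2].length = v[i + 1].length + 1
    rcases hv.isChild_getElem_add_two h with hchild | hchild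
    · exact .inr hchild.length_eq
    · have := hchild.length_eq
      have := ih (by omega)
      omega

theorem length_getElem_lt_add_two (hv : IsTwoTreeLine v) {i : ℕ} (h : i + 2 < v.length) :
    v[i].length < v[i + 2].length := by
  have := hv.length_getElem_succ (i := i) (by omega)
  rcases hv.isChild_getElem_add_two h with hchild | hchild <;>
  · have := hchild.length_eq
    omega

theorem sortedLE_map_length (hv : IsTwoTreeLine v) : (v.map List.length).SortedLE := by
  refine List.sortedLE_iff_isChain.mpr (List.isChain_iff_getElem.mpr fun i hi => ?_)
  simp only [List.length_map, List.getElem_map] at hi ⊢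
  rcases hv.length_getElem_succ hi with h | h <;> omega

theorem length_getElem_le_of_le (hv : IsTwoTreeLine v) {i j : ℕ} (hij : i ≤ j)
    (hj : j < v.length) : v[i].length ≤ v[j].length := by
  have := hv.sortedLE_map_length.getElem_le_getElem_of_le
    (hi := by rw [List.length_map]; omega) (hj := by rwa [List.length_map]) hij
  rwa [List.getElem_map, List.getElem_map] at this

theorem length_getElem_lt_of_add_two_le (hv : IsTwoTreeLine v) {i j : ℕ} (hij : i + 2 ≤ j)
    (hj : j < v.length) : v[i].length < v[j].length :=
  (hv.length_getElem_lt_add_two (by omega)).trans_le (hv.length_getElem_le_of_le hij hj)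

theorem add_one_le_length_getElem_two_mul (hv : IsTwoTreeLine v) {k : ℕ}
    (h : 2 * k < v.length) : k + 1 ≤ v[2 * k].length := by
  induction k with
  | zero => simp [hv.length_getElem_zero]
  | succ k ih =>
    have := ih (by omega)
    have := hv.length_getElem_lt_add_two (i := 2 * k) (by omega)
    simp only [Nat.mul_succ] at *
    omega

end IsTwoTreeLine

/-- A 2-tree-line has nondecreasing node levels, contains at most 2 nodes at
each level `ℓ ≥ 1`, and hence a 2-tree-line within a full support tree of
depth `n` contains (not counting the root) at most `2 * (n - 1)` nodes. -/
theorem two_tree_line_length_bound (v : List (List Bool)) (hv : IsTwoTreeLine v) :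
    (∀ i j : Fin v.length, i ≤ j → (v.get i).length ≤ (v.get j).length) ∧
    (∀ ℓ : ℕ, 1 ≤ ℓ → v.countP (fun p => p.length = ℓ) ≤ 2) ∧
    (∀ n : ℕ, 1 ≤ n → (∀ p ∈ v, p.length ≤ n - 1) → v.length ≤ 2 * (n - 1)) := by
  refine ⟨fun i j hij => hv.length_getElem_le_of_le hij j.isLt, fun ℓ _ => ?_,
    fun n _ hdepth => ?_⟩
  · refine List.countP_le_two_of_forall_add_two_le fun i j hij hi => ?_
    have := hv.length_getElem_lt_of_add_two_le hij j.isLt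
    simp only [Fin.getElem_fin, decide_eq_true_eq] at hi ⊢
    omega
  · by_contra! hlong
    have := hv.add_one_le_length_getElem_two_mul hlong
    have := hdepth _ (List.getElem_mem hlong)
    omega
end
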